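/- If T is a linear map on the real space of Hermitian operators on ℂ^N that is positive, trace-preserving, and orthogonal with respect to the Hilbert–Schmidt inner product, then its inverse T⁻¹ is also positive and trace-preserving. -/

import Mathlib

/-!
A map that preserves the pairing `Tr(AB)` is injective (`Tr(A²) = 0` forces `A = 0`), hence
bijective in finite dimension. Its inverse `S` preserves the trace because `T` does, and is
positive because a Hermitian `M` is positive semidefinite iff `Tr(MB) ≥ 0` for all positive
semidefinite `B`: for `A ≥ 0` and `B ≥ 0`, `Tr(S(A) B) = Tr(A T(B)) ≥ 0`.
-/

open Matrix
open scoped ComplexOrder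

namespace Matrix

variable {n 𝕜 : Type*} [Fintype n] [RCLike 𝕜]

theorem dotProduct_mulVec_eq_trace_mul_vecMulVec (M : Matrix n n 𝕜) (x : n → 𝕜) :
    star x ⬝ᵥ (M *ᵥ x) = (M * vecMulVec x (star x)).trace := by
  rw [vecMulVec_eq Unit, ← Matrix.mul_assoc, trace_mul_comm, ← replicateCol_mulVec]
  simp [trace]

theorem PosSemidef.trace_mul_nonneg {A B : Matrix n n 𝕜} (hA : A.PosSemidef)
    (hB : B.PosSemidef) : 0 ≤ (A * B).trace := by
  obtain ⟨m, v, rfl⟩ := posSemidef_iff_eq_sum_vecMulVec.mp hB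
  rw [Matrix.mul_sum, trace_sum]
  exact Finset.sum_nonneg fun i _ ↦
    dotProduct_mulVec_eq_trace_mul_vecMulVec A (v i) ▸ hA.dotProduct_mulVec_nonneg (v i)

theorem posSemidef_iff_trace_mul_nonneg {M : Matrix n n 𝕜} :
    M.PosSemidef ↔ M.IsHermitian ∧ ∀ B : Matrix n n 𝕜, B.PosSemidef → 0 ≤ (M * B).trace := by
  refine ⟨fun hM ↦ ⟨hM.isHermitian, fun B hB ↦ hM.trace_mul_nonneg hB⟩,
    fun ⟨hM, h⟩ ↦ posSemidef_iff_dotProduct_mulVec.mpr ⟨hM, fun x ↦ ?_⟩⟩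
  rw [dotProduct_mulVec_eq_trace_mul_vecMulVec]
  exact h _ (posSemidef_vecMulVec_self_star x)

instance : FiniteDimensional ℝ (selfAdjoint (Matrix n n 𝕜)) :=
  FiniteDimensional.finiteDimensional_submodule (selfAdjoint.submodule ℝ (Matrix n n 𝕜))

variable (T : selfAdjoint (Matrix n n 𝕜) →ₗ[ℝ] selfAdjoint (Matrix n n 𝕜))

theorem injective_of_trace_mul_self_preserving
    (hT : ∀ A : selfAdjoint (Matrix n n 𝕜),
      ((T A : Matrix n n 𝕜) * T A).trace = (A * A : Matrix n n 𝕜).trace) :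
    Function.Injective T := by
  rw [← LinearMap.ker_eq_bot, LinearMap.ker_eq_bot']
  intro A hA
  have hAA : ((A : Matrix n n 𝕜) * A).trace = 0 := by simpa [hA] using (hT A).symm
  have hA_herm : (A : Matrix n n 𝕜)ᴴ = A := A.prop
  exact Subtype.ext (trace_conjTranspose_mul_self_eq_zero_iff.mp (by rwa [hA_herm]))

theorem posSemidef_rightInverse_of_trace_mul_preserving
    (hpos : ∀ A : selfAdjoint (Matrix n n 𝕜),
      (A : Matrix n n 𝕜).PosSemidef → (T A : Matrix n n 𝕜).PosSemidef)
    (horth : ∀ A B : selfAdjoint (Matrix n n 𝕜),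
      ((T A : Matrix n n 𝕜) * T B).trace = (A * B : Matrix n n 𝕜).trace)
    {S : selfAdjoint (Matrix n n 𝕜) → selfAdjoint (Matrix n n 𝕜)} (hS : ∀ A, T (S A) = A)
    {A : selfAdjoint (Matrix n n 𝕜)} (hA : (A : Matrix n n 𝕜).PosSemidef) :
    (S A : Matrix n n 𝕜).PosSemidef := by
  refine posSemidef_iff_trace_mul_nonneg.mpr ⟨(S A).prop, fun B hB ↦ ?_⟩
  have h := horth (S A) ⟨B, hB.isHermitian⟩
  rw [hS] at h
  exact h ▸ hA.trace_mul_nonneg (hpos _ hB)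

end Matrix

/-- If `T` is a linear map on the real space of Hermitian operators on
`ℂ^N` that is positive, trace-preserving, and orthogonal with respect to the
Hilbert–Schmidt inner product `Tr(AB)`, then its inverse `T⁻¹` exists and is also positive
and trace-preserving. -/
theorem stmt_10 (N : ℕ)
    (T : selfAdjoint (Matrix (Fin N) (Fin N) ℂ) →ₗ[ℝ]
      selfAdjoint (Matrix (Fin N) (Fin N) ℂ))
    (hpos : ∀ A : selfAdjoint (Matrix (Fin N) (Fin N) ℂ),
      ((A : Matrix (Fin N) (Fin N) ℂ)).PosSemidef →
      ((T A : Matrix (Fin N) (Fin N) ℂ)).PosSemidef)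
    (htr : ∀ A : selfAdjoint (Matrix (Fin N) (Fin N) ℂ),
      ((T A : Matrix (Fin N) (Fin N) ℂ)).trace = ((A : Matrix (Fin N) (Fin N) ℂ)).trace)
    (horth : ∀ A B : selfAdjoint (Matrix (Fin N) (Fin N) ℂ),
      ((T A : Matrix (Fin N) (Fin N) ℂ) * (T B : Matrix (Fin N) (Fin N) ℂ)).trace =
      ((A : Matrix (Fin N) (Fin N) ℂ) * (B : Matrix (Fin N) (Fin N) ℂ)).trace) :
    ∃ S : selfAdjoint (Matrix (Fin N) (Fin N) ℂ) →ₗ[ℝ]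
      selfAdjoint (Matrix (Fin N) (Fin N) ℂ),
      (∀ A, S (T A) = A) ∧ (∀ A, T (S A) = A) ∧
      (∀ A : selfAdjoint (Matrix (Fin N) (Fin N) ℂ),
        ((A : Matrix (Fin N) (Fin N) ℂ)).PosSemidef →
        ((S A : Matrix (Fin N) (Fin N) ℂ)).PosSemidef) ∧
      (∀ A : selfAdjoint (Matrix (Fin N) (Fin N) ℂ),
        ((S A : Matrix (Fin N) (Fin N) ℂ)).trace =
        ((A : Matrix (Fin N) (Fin N) ℂ)).trace) := by
  have hinj := injective_of_trace_mul_self_preserving T fun A ↦ horth A A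
  let e := LinearEquiv.ofBijective T ⟨hinj, LinearMap.injective_iff_surjective.mp hinj⟩
  have hTS : ∀ A, T (e.symm A) = A := e.apply_symm_apply
  refine ⟨e.symm.toLinearMap, e.symm_apply_apply, hTS,
    fun A hA ↦ posSemidef_rightInverse_of_trace_mul_preserving T hpos horth hTS hA,
    fun A ↦ ?_⟩
  have h := htr (e.symm A)
  rw [hTS] at h
  exact h.symm
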